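/- arXiv:2501.10309 — 5 statements merged into one kernel-verified Lean document; each statement's English description precedes it below -/
import Mathlib

section
/- Let A and B be n×n positive definite real symmetric matrices, and let A_i and B_i denote the (n−1)×(n−1) matrices obtained from A and B by deleting the i-th row and i-th column. Then det(A+B)/det(A_i+B_i) ≥ det(A)/det(A_i) + det(B)/det(B_i). -/
/-!
For `M` positive definite, `det M / det Mᵢ` is the Schur complement of `Mᵢ` in `M`, and completing
the square identifies it with the minimum of `xᵀ M x` over the affine hyperplane `xᵢ = 1`. The
minimum of `xᵀ (A + B) x` there is attained at some `x`, where it splits as `xᵀ A x + xᵀ B x`, and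
each summand is at least the corresponding minimum.
-/

open Matrix

namespace Matrix

section

variable {m : Type*} [Fintype m] [DecidableEq m]

theorem isLeast_dotProduct_mulVec_fromBlocks_sumElim_one {A : Matrix m m ℝ} (hA : A.PosDef)
    (b : Matrix m Unit ℝ) (d : Matrix Unit Unit ℝ) :
    IsLeast (Set.range fun u : m → ℝ => (u ⊕ᵥ 1) ⬝ᵥ fromBlocks A b bᵀ d *ᵥ (u ⊕ᵥ 1))
      ((d - bᵀ * A⁻¹ * b) () ()) := by
  have := hA.isUnit.invertible
  have schur (u : m → ℝ) : (u ⊕ᵥ 1) ⬝ᵥ fromBlocks A b bᵀ d *ᵥ (u ⊕ᵥ 1) =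
      (u + (A⁻¹ * b) *ᵥ 1) ⬝ᵥ A *ᵥ (u + (A⁻¹ * b) *ᵥ 1) + (d - bᵀ * A⁻¹ * b) () () := by
    have := schur_complement_eq₁₁ b d u 1 hA.isHermitian
    simp only [star_trivial, ← dotProduct_mulVec, conjTranspose_eq_transpose_of_trivial] at this
    rw [this]
    simp [dotProduct, mulVec]
  refine ⟨⟨-((A⁻¹ * b) *ᵥ 1), (schur _).trans (by simp)⟩, ?_⟩
  rintro _ ⟨u, rfl⟩
  beta_reduce
  rw [schur u, le_add_iff_nonneg_left]
  simpa using hA.posSemidef.dotProduct_mulVec_nonneg (u + (A⁻¹ * b) *ᵥ 1)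

theorem PosDef.isLeast_dotProduct_mulVec_sumElim_one {M : Matrix (m ⊕ Unit) (m ⊕ Unit) ℝ}
    (hM : M.PosDef) :
    IsLeast (Set.range fun u : m → ℝ => (u ⊕ᵥ 1) ⬝ᵥ M *ᵥ (u ⊕ᵥ 1))
      (M.det / M.toBlocks₁₁.det) := by
  have h₁₁ : M.toBlocks₁₁.PosDef := hM.submatrix Sum.inl_injective
  have h₂₁ : M.toBlocks₂₁ = M.toBlocks₁₂ᵀ := by
    ext i j
    simpa [toBlocks₂₁, toBlocks₁₂] using (hM.isHermitian.apply (Sum.inr i) (Sum.inl j)).symm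
  have := h₁₁.isUnit.invertible
  have hdet : M.det = M.toBlocks₁₁.det *
      (M.toBlocks₂₂ - M.toBlocks₂₁ * M.toBlocks₁₁⁻¹ * M.toBlocks₁₂) () () := by
    conv_lhs => rw [← M.fromBlocks_toBlocks]
    rw [det_fromBlocks₁₁, det_unique (_ - _), invOf_eq_nonsing_inv]
  rw [hdet, mul_div_cancel_left₀ _ h₁₁.det_pos.ne']
  simpa only [← h₂₁, fromBlocks_toBlocks] using
    isLeast_dotProduct_mulVec_fromBlocks_sumElim_one h₁₁ M.toBlocks₁₂ M.toBlocks₂₂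

end

theorem dotProduct_mulVec_submatrix_equiv {α m ι : Type*} [Fintype m] [Fintype ι]
    [NonUnitalNonAssocSemiring α] (M : Matrix ι ι α) (e : m ≃ ι) (x : m → α) :
    x ⬝ᵥ M.submatrix e e *ᵥ x = (x ∘ e.symm) ⬝ᵥ M *ᵥ (x ∘ e.symm) := by
  rw [submatrix_mulVec_equiv, ← comp_equiv_symm_dotProduct]

theorem PosDef.isLeast_dotProduct_mulVec_of_apply_eq_one {ι : Type*} [Fintype ι]
    [DecidableEq ι] {M : Matrix ι ι ℝ} (hM : M.PosDef) (k : ι) :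
    IsLeast ((fun x => x ⬝ᵥ M *ᵥ x) '' {x | x k = 1})
      (M.det / (M.submatrix ((↑) : {j // j ≠ k} → ι) (↑)).det) := by
  let e : {j // j ≠ k} ⊕ Unit ≃ ι :=
    (Equiv.optionEquivSumPUnit _).symm.trans (Equiv.optionSubtypeNe k)
  have hset : {x : ι → ℝ | x k = 1} = Set.range fun u => (u ⊕ᵥ (1 : Unit → ℝ)) ∘ e.symm := by
    ext x
    constructor
    · intro (hx : x k = 1)
      refine ⟨fun j => x j, funext fun j => ?_⟩
      by_cases hj : j = k
      · subst hj
        simpa [e] using hx.symm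
      · simp [e, Equiv.optionSubtypeNe_symm_of_ne hj]
    · rintro ⟨u, rfl⟩
      simp [e]
  have h := (hM.submatrix e.injective).isLeast_dotProduct_mulVec_sumElim_one
  have h₁₁ : (M.submatrix e e).toBlocks₁₁ = M.submatrix (↑) (↑) := rfl
  rw [det_submatrix_equiv_self, h₁₁] at h
  rw [hset, ← Set.range_comp]
  simpa [Function.comp_def, dotProduct_mulVec_submatrix_equiv] using h

theorem PosDef.isLeast_dotProduct_mulVec_of_apply_eq_one_succAbove {n : ℕ}
    {M : Matrix (Fin (n + 1)) (Fin (n + 1)) ℝ} (hM : M.PosDef) (i : Fin (n + 1)) :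
    IsLeast ((fun x => x ⬝ᵥ M *ᵥ x) '' {x | x i = 1})
      (M.det / (M.submatrix i.succAbove i.succAbove).det) := by
  have hdet : (M.submatrix i.succAbove i.succAbove).det =
      (M.submatrix ((↑) : {j // j ≠ i} → _) (↑)).det := by
    rw [← det_submatrix_equiv_self (finSuccAboveEquiv i)]
    rfl
  rw [hdet]
  exact hM.isLeast_dotProduct_mulVec_of_apply_eq_one i

end Matrix

theorem bergstrom_inequality_general (n : ℕ) (A B : Matrix (Fin (n + 1)) (Fin (n + 1)) ℝ)
    (hA : A.PosDef) (hB : B.PosDef) (i : Fin (n + 1)) :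
    (A + B).det / (A.submatrix i.succAbove i.succAbove
        + B.submatrix i.succAbove i.succAbove).det
      ≥ A.det / (A.submatrix i.succAbove i.succAbove).det
        + B.det / (B.submatrix i.succAbove i.succAbove).det := by
  obtain ⟨⟨x, hx, hxAB⟩, -⟩ := (hA.add hB).isLeast_dotProduct_mulVec_of_apply_eq_one_succAbove i
  calc A.det / (A.submatrix i.succAbove i.succAbove).det
        + B.det / (B.submatrix i.succAbove i.succAbove).det
      ≤ x ⬝ᵥ A *ᵥ x + x ⬝ᵥ B *ᵥ x :=
        add_le_add ((hA.isLeast_dotProduct_mulVec_of_apply_eq_one_succAbove i).2 ⟨x, hx, rfl⟩)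
          ((hB.isLeast_dotProduct_mulVec_of_apply_eq_one_succAbove i).2 ⟨x, hx, rfl⟩)
    _ = x ⬝ᵥ (A + B) *ᵥ x := by rw [add_mulVec, dotProduct_add]
    _ = (A + B).det / ((A + B).submatrix i.succAbove i.succAbove).det := hxAB

/-- Bergström's inequality: for positive definite symmetric real matrices `A`, `B`,
deleting the `i`-th row and column (via `Fin.succAbove`),
`det(A+B)/det(A_i+B_i) ≥ det A / det A_i + det B / det B_i`. -/
theorem bergstrom_inequality (n : ℕ) (A B : Matrix (Fin (n + 1)) (Fin (n + 1)) ℝ)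
    (hA : A.PosDef) (hB : B.PosDef) (hAs : A.IsSymm) (hBs : B.IsSymm) (i : Fin (n + 1)) :
    (A + B).det / (A.submatrix i.succAbove i.succAbove
        + B.submatrix i.succAbove i.succAbove).det
      ≥ A.det / (A.submatrix i.succAbove i.succAbove).det
        + B.det / (B.submatrix i.succAbove i.succAbove).det :=
  bergstrom_inequality_general n A B hA hB i
end

section
/- Bergström's inequality is equivalent to concavity of the map A ↦ det(A)/det(A_i) on positive definite matrices: for positive definite n×n matrices S, T and λ ∈ [0,1], det(λS+(1−λ)T)/det(λS_i + (1−λ)T_i) ≥ λ·det(S)/det(S_i) + (1−λ)·det(T)/det(T_i). -/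
/-!
The ratio `det A / det A_i` equals `1 / (A⁻¹)ᵢᵢ`, and for positive definite `A` this is the
minimum of the quadratic form `y ↦ yᵀ A y` over the affine hyperplane `yᵢ = 1`, attained at the
rescaled `i`-th column of `A⁻¹`. A pointwise minimum of functions that are linear in `A` is
concave, which is the inequality.
-/

namespace Matrix

lemma adjugate_apply_self_fin_succ {R : Type*} [CommRing R] {n : ℕ}
    (A : Matrix (Fin (n + 1)) (Fin (n + 1)) R) (i : Fin (n + 1)) :
    A.adjugate i i = (A.submatrix i.succAbove i.succAbove).det := by
  rw [adjugate_fin_succ_eq_det_submatrix, (Even.add_self (i : ℕ)).neg_one_pow, one_mul]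

lemma det_div_det_submatrix_succAbove_self {K : Type*} [Field K] {n : ℕ}
    (A : Matrix (Fin (n + 1)) (Fin (n + 1)) K) (i : Fin (n + 1)) :
    A.det / (A.submatrix i.succAbove i.succAbove).det = (A⁻¹ i i)⁻¹ := by
  rw [inv_def, smul_apply, adjugate_apply_self_fin_succ, Ring.inverse_eq_inv, smul_eq_mul,
    mul_inv, inv_inv, div_eq_mul_inv]

variable {m : Type*}

lemma convex_setOf_posDef : Convex ℝ {A : Matrix m m ℝ | A.PosDef} := by
  intro A hA B hB a b ha hb hab
  rcases ha.eq_or_lt with rfl | ha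
  · simpa [show b = 1 by linarith] using hB
  · exact (PosDef.smul hA ha).add_posSemidef (PosSemidef.smul hB.posSemidef hb)

variable [Fintype m]

lemma dotProduct_add_smul_mulVec {R : Type*} [CommSemiring R] (A B : Matrix m m R) (a b : R)
    (y : m → R) : y ⬝ᵥ (a • A + b • B) *ᵥ y = a * (y ⬝ᵥ A *ᵥ y) + b * (y ⬝ᵥ B *ᵥ y) := by
  simp only [add_mulVec, smul_mulVec, dotProduct_add, dotProduct_smul, smul_eq_mul]

lemma IsHermitian.dotProduct_mulVec_comm {A : Matrix m m ℝ} (hA : A.IsHermitian)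
    (x y : m → ℝ) : x ⬝ᵥ A *ᵥ y = y ⬝ᵥ A *ᵥ x := by
  rw [dotProduct_mulVec, ← mulVec_transpose, ← conjTranspose_eq_transpose_of_trivial, hA.eq,
    dotProduct_comm]

variable [DecidableEq m]

lemma mulVec_col_inv {R : Type*} [CommRing R] {A : Matrix m m R} (hA : IsUnit A) (i : m) :
    A *ᵥ A⁻¹.col i = Pi.single i 1 := by
  rw [← mulVec_single_one, mulVec_mulVec, mul_nonsing_inv A ((isUnit_iff_isUnit_det A).1 hA),
    one_mulVec]

namespace PosDef

lemma isLeast_dotProduct_mulVec {A : Matrix m m ℝ} (hA : A.PosDef) (i : m) :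
    IsLeast ((fun y => y ⬝ᵥ A *ᵥ y) '' {y | y i = 1}) (A⁻¹ i i)⁻¹ := by
  set d := A⁻¹ i i
  have hd : 0 < d := hA.inv.diag_pos
  set x := d⁻¹ • A⁻¹.col i
  have hxi : x i = 1 := inv_mul_cancel₀ hd.ne'
  have hAx (w : m → ℝ) : w ⬝ᵥ A *ᵥ x = d⁻¹ * w i := by
    rw [mulVec_smul, mulVec_col_inv hA.isUnit, dotProduct_smul, dotProduct_single, mul_one,
      smul_eq_mul]
  refine ⟨⟨x, hxi, by simp only [hAx, hxi, mul_one]⟩, ?_⟩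
  rintro _ ⟨y, hyi, rfl⟩
  have hcross : (y - x) ⬝ᵥ A *ᵥ x = 0 := by
    rw [hAx, Pi.sub_apply, hyi, hxi, sub_self, mul_zero]
  have hsplit : y ⬝ᵥ A *ᵥ y = d⁻¹ + (y - x) ⬝ᵥ A *ᵥ (y - x) := by
    have hy : y = x + (y - x) := (add_sub_cancel x y).symm
    conv_lhs => rw [hy]
    rw [mulVec_add, dotProduct_add, add_dotProduct, add_dotProduct,
      hA.isHermitian.dotProduct_mulVec_comm x (y - x), hcross, hAx, hxi]
    ring
  have hnonneg : 0 ≤ (y - x) ⬝ᵥ A *ᵥ (y - x) := by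
    simpa only [star_trivial] using hA.posSemidef.dotProduct_mulVec_nonneg (y - x)
  change d⁻¹ ≤ y ⬝ᵥ A *ᵥ y
  linarith

theorem concaveOn_inv_inv_apply_self (i : m) :
    ConcaveOn ℝ {A : Matrix m m ℝ | A.PosDef} (fun A => (A⁻¹ i i)⁻¹) := by
  refine ⟨convex_setOf_posDef, fun A hA B hB a b ha hb hab => ?_⟩
  obtain ⟨⟨y, hyi, hy⟩, -⟩ := isLeast_dotProduct_mulVec (convex_setOf_posDef hA hB ha hb hab) i
  have hAy := (isLeast_dotProduct_mulVec hA i).2 ⟨y, hyi, rfl⟩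
  have hBy := (isLeast_dotProduct_mulVec hB i).2 ⟨y, hyi, rfl⟩
  simp only [← hy, dotProduct_add_smul_mulVec, smul_eq_mul]
  gcongr

end PosDef

end Matrix

open Matrix

theorem bergstrom_concavity_general (n : ℕ) (S T : Matrix (Fin (n + 1)) (Fin (n + 1)) ℝ)
    (hS : S.PosDef) (hT : T.PosDef)
    (i : Fin (n + 1)) (lam : ℝ) (hlam0 : 0 ≤ lam) (hlam1 : lam ≤ 1) :
    (lam • S + (1 - lam) • T).det /
        (lam • S.submatrix i.succAbove i.succAbove
          + (1 - lam) • T.submatrix i.succAbove i.succAbove).det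
      ≥ lam * (S.det / (S.submatrix i.succAbove i.succAbove).det)
        + (1 - lam) * (T.det / (T.submatrix i.succAbove i.succAbove).det) := by
  have h := (PosDef.concaveOn_inv_inv_apply_self i).2 hS hT hlam0 (sub_nonneg.2 hlam1)
    (add_sub_cancel lam 1)
  simp only [← det_div_det_submatrix_succAbove_self, smul_eq_mul] at h
  exact h

/-- Concavity form of Bergström's inequality: the map `A ↦ det A / det A_i` is concave
on positive definite symmetric matrices. -/
theorem bergstrom_concavity (n : ℕ) (S T : Matrix (Fin (n + 1)) (Fin (n + 1)) ℝ)
    (hS : S.PosDef) (hT : T.PosDef) (hSs : S.IsSymm) (hTs : T.IsSymm)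
    (i : Fin (n + 1)) (lam : ℝ) (hlam0 : 0 ≤ lam) (hlam1 : lam ≤ 1) :
    (lam • S + (1 - lam) • T).det /
        (lam • S.submatrix i.succAbove i.succAbove
          + (1 - lam) • T.submatrix i.succAbove i.succAbove).det
      ≥ lam * (S.det / (S.submatrix i.succAbove i.succAbove).det)
        + (1 - lam) * (T.det / (T.submatrix i.succAbove i.succAbove).det) :=
  bergstrom_concavity_general n S T hS hT i lam hlam0 hlam1
end

section
/- Ky Fan's inequality: Let A and B be n×n positive definite real symmetric matrices and, for 1 ≤ k ≤ n−1, let A_(k) and B_(k) denote the leading principal (n−k)×(n−k) submatrices. Then (det(A+B)/det(A_(k)+B_(k)))^{1/k} ≥ (det(A)/det(A_(k)))^{1/k} + (det(B)/det(B_(k)))^{1/k}. -/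
/-!
For positive definite `M`, written in blocks with top-left block `M₁₁` of size `n - k`, the ratio
`det M / det M₁₁` is the determinant of the Schur complement `S M = M₂₂ - M₂₁ M₁₁⁻¹ M₁₂`.
Its quadratic form is `y* (S M) y = min_x (x, y)* M (x, y)`, and a minimum of a sum dominates the
sum of the minima, so `S A + S B ≤ S (A + B)` in the Loewner order. Minkowski's determinant
inequality `det X ^ (1/k) + det Y ^ (1/k) ≤ det (X + Y) ^ (1/k)` on `k × k` matrices, applied to
`S A + S B` and then to `S (A + B) = (S A + S B) + (S (A + B) - S A - S B)`, gives the claim.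
Minkowski's inequality itself reduces, after conjugating by `√X`, to `X = 1`, where it is the
superadditivity `∏ aᵢ ^ wᵢ + ∏ bᵢ ^ wᵢ ≤ ∏ (aᵢ + bᵢ) ^ wᵢ` of weighted geometric means on the
eigenvalues, itself two applications of AM–GM.
-/

open Finset
open scoped ComplexOrder MatrixOrder

theorem Real.geom_mean_add_geom_mean_le_weighted {ι : Type*} (s : Finset ι) (w a b : ι → ℝ)
    (hw : ∀ i ∈ s, 0 ≤ w i) (hw₁ : ∑ i ∈ s, w i = 1) (ha : ∀ i ∈ s, 0 < a i)
    (hb : ∀ i ∈ s, 0 ≤ b i) :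
    ∏ i ∈ s, a i ^ w i + ∏ i ∈ s, b i ^ w i ≤ ∏ i ∈ s, (a i + b i) ^ w i := by
  have hab : ∀ i ∈ s, 0 < a i + b i := fun i hi => add_pos_of_pos_of_nonneg (ha i hi) (hb i hi)
  have hfactor (c : ι → ℝ) (hc : ∀ i ∈ s, 0 ≤ c i) :
      ∏ i ∈ s, c i ^ w i = (∏ i ∈ s, (c i / (a i + b i)) ^ w i) * ∏ i ∈ s, (a i + b i) ^ w i := by
    rw [← prod_mul_distrib]
    refine prod_congr rfl fun i hi => ?_
    rw [← Real.mul_rpow (div_nonneg (hc i hi) (hab i hi).le) (hab i hi).le,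
      div_mul_cancel₀ _ (hab i hi).ne']
  have hamgm (c : ι → ℝ) (hc : ∀ i ∈ s, 0 ≤ c i) :=
    Real.geom_mean_le_arith_mean_weighted s w (fun i => c i / (a i + b i)) hw hw₁
      fun i hi => div_nonneg (hc i hi) (hab i hi).le
  have hsum : ∑ i ∈ s, w i * (a i / (a i + b i)) + ∑ i ∈ s, w i * (b i / (a i + b i)) = 1 := by
    rw [← sum_add_distrib, ← hw₁]
    refine sum_congr rfl fun i hi => ?_
    rw [← mul_add, ← add_div, div_self (hab i hi).ne', mul_one]
  rw [hfactor a fun i hi => (ha i hi).le, hfactor b hb, ← add_mul]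
  exact mul_le_of_le_one_left (prod_nonneg fun i hi => Real.rpow_nonneg (hab i hi).le _)
    (hsum ▸ add_le_add (hamgm a fun i hi => (ha i hi).le) (hamgm b hb))

namespace Matrix

section Minkowski

variable {n : Type*} [Fintype n] [DecidableEq n]

theorem IsHermitian.det_one_add {C : Matrix n n ℝ} (hC : C.IsHermitian) :
    (1 + C).det = ∏ i, (1 + hC.eigenvalues i) := by
  have h : 1 + C = cfc (fun x : ℝ => 1 + x) C := by
    rw [cfc_add .., cfc_const_one .., cfc_id' ..]
  rw [h, hC.cfc_eq]
  simp [IsHermitian.cfc, -Unitary.conjStarAlgAut_apply]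

theorem PosSemidef.one_add_det_rpow_le [Nonempty n] {C : Matrix n n ℝ} (hC : C.PosSemidef) :
    1 + C.det ^ (1 / Fintype.card n : ℝ) ≤ (1 + C).det ^ (1 / Fintype.card n : ℝ) := by
  have hw : ∑ _i : n, (1 / Fintype.card n : ℝ) = 1 := by
    rw [sum_const, card_univ, nsmul_eq_mul]
    field_simp
  have hdet : C.det = ∏ i, hC.1.eigenvalues i := by simpa using hC.1.det_eq_prod_eigenvalues
  rw [hC.1.det_one_add, hdet, ← Real.finsetProd_rpow _ _ fun i _ => hC.eigenvalues_nonneg i,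
    ← Real.finsetProd_rpow _ _ fun i _ => add_nonneg zero_le_one (hC.eigenvalues_nonneg i)]
  simpa using Real.geom_mean_add_geom_mean_le_weighted univ _ 1 hC.1.eigenvalues
    (fun _ _ => by positivity) hw (fun _ _ => one_pos) fun i _ => hC.eigenvalues_nonneg i

theorem PosDef.det_rpow_add_det_rpow_le [Nonempty n] {X Y : Matrix n n ℝ} (hX : X.PosDef)
    (hY : Y.PosSemidef) :
    X.det ^ (1 / Fintype.card n : ℝ) + Y.det ^ (1 / Fintype.card n : ℝ)
      ≤ (X + Y).det ^ (1 / Fintype.card n : ℝ) := by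
  obtain ⟨R, hR, rfl⟩ : ∃ R : Matrix n n ℝ, R.PosDef ∧ R * R = X :=
    ⟨CFC.sqrt X, IsStrictlyPositive.posDef (IsStrictlyPositive.sqrt X hX.isStrictlyPositive),
      CFC.sqrt_mul_sqrt_self X hX.posSemidef.nonneg⟩
  have hRdet : IsUnit R.det := hR.det_pos.ne'.isUnit
  set C := R⁻¹ * Y * R⁻¹ with hC_def
  have hC : C.PosSemidef := by
    simpa only [hR.1.inv.eq] using hY.conjTranspose_mul_mul_same R⁻¹
  have hY_eq : Y = R * C * R := by
    rw [hC_def, ← Matrix.mul_assoc, ← Matrix.mul_assoc, mul_nonsing_inv _ hRdet, Matrix.one_mul,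
      nonsing_inv_mul_cancel_right _ _ hRdet]
  have hXY_eq : R * R + Y = R * (1 + C) * R := by
    rw [hY_eq, Matrix.mul_add, Matrix.add_mul, Matrix.mul_one]
  have hRR : 0 ≤ R.det * R.det := mul_self_nonneg _
  rw [hXY_eq, hY_eq]
  simp only [det_mul, mul_right_comm _ _ R.det, Real.mul_rpow hRR hC.det_nonneg,
    Real.mul_rpow hRR (PosSemidef.one.add hC).det_nonneg]
  rw [← mul_one_add]
  exact mul_le_mul_of_nonneg_left hC.one_add_det_rpow_le (Real.rpow_nonneg hRR _)

end Minkowski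

section SchurComplement

variable {m p α 𝕜 : Type*} [RCLike 𝕜]

theorem IsHermitian.conjTranspose_toBlocks₁₂ {M : Matrix (m ⊕ p) (m ⊕ p) 𝕜}
    (hM : M.IsHermitian) : M.toBlocks₁₂ᴴ = M.toBlocks₂₁ :=
  (isHermitian_fromBlocks_iff.mp ((fromBlocks_toBlocks M).symm ▸ hM)).2.1

theorem PosDef.toBlocks₁₁ {M : Matrix (m ⊕ p) (m ⊕ p) 𝕜} (hM : M.PosDef) :
    M.toBlocks₁₁.PosDef :=
  hM.submatrix Sum.inl_injective

variable [Fintype m] [DecidableEq m]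

noncomputable def schurComplement₁₁ [CommRing α] (M : Matrix (m ⊕ p) (m ⊕ p) α) : Matrix p p α :=
  M.toBlocks₂₂ - M.toBlocks₂₁ * M.toBlocks₁₁⁻¹ * M.toBlocks₁₂

variable {M N : Matrix (m ⊕ p) (m ⊕ p) 𝕜}

theorem IsHermitian.schurComplement₁₁ (hM : M.IsHermitian) :
    M.schurComplement₁₁.IsHermitian := by
  rw [Matrix.schurComplement₁₁, ← hM.conjTranspose_toBlocks₁₂]
  exact (hM.submatrix Sum.inr).sub (isHermitian_conjTranspose_mul_mul _ (hM.submatrix Sum.inl).inv)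

variable [Fintype p]

theorem IsHermitian.dotProduct_mulVec_eq_add_schurComplement₁₁ (hM : M.IsHermitian)
    [Invertible M.toBlocks₁₁] (x : m → 𝕜) (y : p → 𝕜) :
    star (x ⊕ᵥ y) ⬝ᵥ (M *ᵥ (x ⊕ᵥ y))
      = star (x + (M.toBlocks₁₁⁻¹ * M.toBlocks₁₂) *ᵥ y)
          ⬝ᵥ (M.toBlocks₁₁ *ᵥ (x + (M.toBlocks₁₁⁻¹ * M.toBlocks₁₂) *ᵥ y))
        + star y ⬝ᵥ (M.schurComplement₁₁ *ᵥ y) := by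
  have h₁₁ : M.toBlocks₁₁.IsHermitian := hM.submatrix Sum.inl
  have h := schur_complement_eq₁₁ M.toBlocks₁₂ M.toBlocks₂₂ x y h₁₁
  rw [hM.conjTranspose_toBlocks₁₂, fromBlocks_toBlocks] at h
  simpa only [dotProduct_mulVec, Matrix.schurComplement₁₁] using h

theorem PosDef.dotProduct_mulVec_schurComplement₁₁_le (hM : M.PosDef) (x : m → 𝕜) (y : p → 𝕜) :
    star y ⬝ᵥ (M.schurComplement₁₁ *ᵥ y) ≤ star (x ⊕ᵥ y) ⬝ᵥ (M *ᵥ (x ⊕ᵥ y)) := by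
  let := hM.toBlocks₁₁.isUnit.invertible
  rw [hM.1.dotProduct_mulVec_eq_add_schurComplement₁₁]
  exact le_add_of_nonneg_left (hM.toBlocks₁₁.posSemidef.dotProduct_mulVec_nonneg _)

theorem PosDef.dotProduct_mulVec_schurComplement₁₁_eq (hM : M.PosDef) (y : p → 𝕜) :
    star y ⬝ᵥ (M.schurComplement₁₁ *ᵥ y)
      = star (-((M.toBlocks₁₁⁻¹ * M.toBlocks₁₂) *ᵥ y) ⊕ᵥ y)
          ⬝ᵥ (M *ᵥ (-((M.toBlocks₁₁⁻¹ * M.toBlocks₁₂) *ᵥ y) ⊕ᵥ y)) := by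
  let := hM.toBlocks₁₁.isUnit.invertible
  simp [hM.1.dotProduct_mulVec_eq_add_schurComplement₁₁]

theorem PosDef.schurComplement₁₁ (hM : M.PosDef) : M.schurComplement₁₁.PosDef := by
  refine .of_dotProduct_mulVec_pos hM.1.schurComplement₁₁ fun y hy => ?_
  rw [hM.dotProduct_mulVec_schurComplement₁₁_eq]
  exact hM.dotProduct_mulVec_pos fun h => hy (by simpa using congrArg (· ∘ Sum.inr) h)

theorem PosDef.schurComplement₁₁_add_le (hM : M.PosDef) (hN : N.PosDef) :
    M.schurComplement₁₁ + N.schurComplement₁₁ ≤ (M + N).schurComplement₁₁ := by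
  refine le_iff.mpr (.of_dotProduct_mulVec_nonneg ?_ fun y => ?_)
  · exact (hM.add hN).1.schurComplement₁₁.sub (hM.1.schurComplement₁₁.add hN.1.schurComplement₁₁)
  set x := -(((M + N).toBlocks₁₁⁻¹ * (M + N).toBlocks₁₂) *ᵥ y)
  rw [sub_mulVec, dotProduct_sub, add_mulVec, dotProduct_add, sub_nonneg,
    (hM.add hN).dotProduct_mulVec_schurComplement₁₁_eq, add_mulVec, dotProduct_add]
  exact add_le_add (hM.dotProduct_mulVec_schurComplement₁₁_le x y)
    (hN.dotProduct_mulVec_schurComplement₁₁_le x y)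

variable [DecidableEq p]

theorem det_eq_det_toBlocks₁₁_mul_det_schurComplement₁₁ [CommRing α]
    (A : Matrix (m ⊕ p) (m ⊕ p) α) (h : IsUnit A.toBlocks₁₁.det) :
    A.det = A.toBlocks₁₁.det * A.schurComplement₁₁.det := by
  let := A.toBlocks₁₁.invertibleOfIsUnitDet h
  conv_lhs => rw [← fromBlocks_toBlocks A, det_fromBlocks₁₁, invOf_eq_nonsing_inv]
  rfl

theorem PosDef.det_div_det_toBlocks₁₁ (hM : M.PosDef) :
    M.det / M.toBlocks₁₁.det = M.schurComplement₁₁.det := by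
  rw [det_eq_det_toBlocks₁₁_mul_det_schurComplement₁₁ M hM.toBlocks₁₁.det_pos.ne'.isUnit,
    mul_div_cancel_left₀ _ hM.toBlocks₁₁.det_pos.ne']

end SchurComplement

theorem PosDef.det_div_det_toBlocks₁₁_rpow_add_le {m p : Type*} [Fintype m] [DecidableEq m]
    [Fintype p] [DecidableEq p] [Nonempty p] {M N : Matrix (m ⊕ p) (m ⊕ p) ℝ}
    (hM : M.PosDef) (hN : N.PosDef) :
    (M.det / M.toBlocks₁₁.det) ^ (1 / Fintype.card p : ℝ)
        + (N.det / N.toBlocks₁₁.det) ^ (1 / Fintype.card p : ℝ)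
      ≤ ((M + N).det / (M.toBlocks₁₁ + N.toBlocks₁₁).det) ^ (1 / Fintype.card p : ℝ) := by
  rw [show M.toBlocks₁₁ + N.toBlocks₁₁ = (M + N).toBlocks₁₁ from rfl, hM.det_div_det_toBlocks₁₁,
    hN.det_div_det_toBlocks₁₁, (hM.add hN).det_div_det_toBlocks₁₁]
  set S := M.schurComplement₁₁ + N.schurComplement₁₁
  have hS : S.PosDef := hM.schurComplement₁₁.add hN.schurComplement₁₁
  have hle : ((M + N).schurComplement₁₁ - S).PosSemidef := hM.schurComplement₁₁_add_le hN
  calc _ ≤ S.det ^ (1 / Fintype.card p : ℝ) :=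
        hM.schurComplement₁₁.det_rpow_add_det_rpow_le hN.schurComplement₁₁.posSemidef
    _ ≤ S.det ^ (1 / Fintype.card p : ℝ)
          + ((M + N).schurComplement₁₁ - S).det ^ (1 / Fintype.card p : ℝ) :=
        le_add_of_nonneg_right (Real.rpow_nonneg hle.det_nonneg _)
    _ ≤ _ := by simpa only [add_sub_cancel] using hS.det_rpow_add_det_rpow_le hle

end Matrix

theorem ky_fan_inequality_general (n k : ℕ) (hk1 : 1 ≤ k) (hkn : k ≤ n - 1)
    (A B : Matrix (Fin n) (Fin n) ℝ)
    (hA : A.PosDef) (hB : B.PosDef) :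
    ((A + B).det / ((A.submatrix (Fin.castLE (Nat.sub_le n k)) (Fin.castLE (Nat.sub_le n k))
          + B.submatrix (Fin.castLE (Nat.sub_le n k)) (Fin.castLE (Nat.sub_le n k))).det))
        ^ ((1 : ℝ) / k)
      ≥ (A.det / (A.submatrix (Fin.castLE (Nat.sub_le n k))
            (Fin.castLE (Nat.sub_le n k))).det) ^ ((1 : ℝ) / k)
        + (B.det / (B.submatrix (Fin.castLE (Nat.sub_le n k))
            (Fin.castLE (Nat.sub_le n k))).det) ^ ((1 : ℝ) / k) := by
  have : Nonempty (Fin k) := Fin.pos_iff_nonempty.mp hk1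
  let e : Fin (n - k) ⊕ Fin k ≃ Fin n := finSumFinEquiv.trans (finCongr (by omega))
  have h₁₁ (M : Matrix (Fin n) (Fin n) ℝ) :
      (M.submatrix e e).toBlocks₁₁
        = M.submatrix (Fin.castLE (Nat.sub_le n k)) (Fin.castLE (Nat.sub_le n k)) :=
    rfl
  have key := (hA.submatrix e.injective).det_div_det_toBlocks₁₁_rpow_add_le
    (hB.submatrix e.injective)
  rw [show A.submatrix e e + B.submatrix e e = (A + B).submatrix e e from rfl] at key
  simpa only [h₁₁, Matrix.det_submatrix_equiv_self, Fintype.card_fin] using key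

/-- Ky Fan's inequality: for positive definite symmetric `n × n` real matrices `A`, `B`
and `1 ≤ k ≤ n - 1`, with `A_(k)` the leading principal `(n-k) × (n-k)` submatrix,
`(det(A+B)/det(A_(k)+B_(k)))^(1/k) ≥ (det A / det A_(k))^(1/k) + (det B / det B_(k))^(1/k)`. -/
theorem ky_fan_inequality (n k : ℕ) (hk1 : 1 ≤ k) (hkn : k ≤ n - 1)
    (A B : Matrix (Fin n) (Fin n) ℝ)
    (hA : A.PosDef) (hB : B.PosDef) (hAs : A.IsSymm) (hBs : B.IsSymm) :
    ((A + B).det / ((A.submatrix (Fin.castLE (Nat.sub_le n k)) (Fin.castLE (Nat.sub_le n k))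
          + B.submatrix (Fin.castLE (Nat.sub_le n k)) (Fin.castLE (Nat.sub_le n k))).det))
        ^ ((1 : ℝ) / k)
      ≥ (A.det / (A.submatrix (Fin.castLE (Nat.sub_le n k))
            (Fin.castLE (Nat.sub_le n k))).det) ^ ((1 : ℝ) / k)
        + (B.det / (B.submatrix (Fin.castLE (Nat.sub_le n k))
            (Fin.castLE (Nat.sub_le n k))).det) ^ ((1 : ℝ) / k) :=
  ky_fan_inequality_general n k hk1 hkn A B hA hB
end

section
/- If A and B are n×n positive definite real symmetric matrices such that det(A_i) = det(B_i) for some index i (where A_i denotes A with the i-th row and column deleted), then for all λ ∈ [0,1], det(λA + (1−λ)B) ≥ λ det(A) + (1−λ) det(B). -/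
/-!
For positive definite `M`, with `M_i` obtained by deleting row and column `i`, the minimum of
`uᵀ M u` over the hyperplane `u_i = 1` is `det M / det M_i`: the minimiser `x` satisfies
`M x ∈ ℝ eᵢ`, and Cramer's rule then reads `det M = det M_i · xᵀ M x`. Take `x` the minimiser
for `C = λA + (1-λ)B`. The quadratic form is linear in the matrix and, as `det A_i = det B_i`,
log-concavity of the determinant gives `det A_i ≤ det C_i`; hence
`λ det A + (1-λ) det B ≤ det A_i · xᵀ C x ≤ det C_i · xᵀ C x = det C`.
-/

open Matrix

namespace Matrix

theorem PosDef.smul_add_smul {m : Type*} {X Y : Matrix m m ℝ} (hX : X.PosDef)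
    (hY : Y.PosDef) {l : ℝ} (h0 : 0 ≤ l) (h1 : l ≤ 1) : (l • X + (1 - l) • Y).PosDef := by
  rcases h0.eq_or_lt with rfl | hl
  · simpa using hY
  · exact (hX.smul hl).add_posSemidef (hY.posSemidef.smul (sub_nonneg.2 h1))

variable {m : Type*} [Fintype m] [DecidableEq m]

theorem IsHermitian.det_smul_one_add_smul {C : Matrix m m ℝ} (hC : C.IsHermitian) (a b : ℝ) :
    (a • 1 + b • C).det = ∏ j, (a + b * hC.eigenvalues j) := by
  conv_lhs => rw [hC.spectral_theorem]
  rw [← map_one (Unitary.conjStarAlgAut ℝ _ hC.eigenvectorUnitary), ← map_smul, ← map_smul,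
    ← map_add, det_map, smul_one_eq_diagonal, ← diagonal_smul, diagonal_add, det_diagonal]
  simp

theorem PosDef.det_rpow_le_det_smul_one_add_smul {C : Matrix m m ℝ} (hC : C.PosDef) {l : ℝ}
    (h0 : 0 ≤ l) (h1 : l ≤ 1) : C.det ^ (1 - l) ≤ (l • 1 + (1 - l) • C).det := by
  have hμ j : 0 ≤ hC.isHermitian.eigenvalues j := (hC.eigenvalues_pos j).le
  rw [hC.isHermitian.det_smul_one_add_smul, hC.isHermitian.det_eq_prod_eigenvalues]
  simp only [RCLike.ofReal_real_eq_id, id]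
  rw [← Real.finsetProd_rpow _ _ fun j _ ↦ hμ j]
  refine Finset.prod_le_prod (fun j _ ↦ Real.rpow_nonneg (hμ j) _) fun j _ ↦ ?_
  simpa using Real.geom_mean_le_arith_mean2_weighted h0 (sub_nonneg.2 h1) zero_le_one (hμ j)
    (add_sub_cancel l 1)

open scoped MatrixOrder in
theorem PosDef.exists_posDef_mul_self_eq {X : Matrix m m ℝ} (hX : X.PosDef) :
    ∃ S : Matrix m m ℝ, S.PosDef ∧ S * S = X := by
  have hSS : CFC.sqrt X * CFC.sqrt X = X := CFC.sqrt_mul_sqrt_self X hX.posSemidef.nonneg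
  refine ⟨CFC.sqrt X, (CFC.sqrt_nonneg X).posSemidef.posDef_iff_det_ne_zero.2 fun h ↦ ?_, hSS⟩
  exact hX.det_pos.ne' (by rw [← hSS, det_mul, h, mul_zero])

theorem PosDef.exists_posDef_mul_mul_eq {S Y : Matrix m m ℝ} (hS : S.PosDef) (hY : Y.PosDef) :
    ∃ C : Matrix m m ℝ, C.PosDef ∧ S * C * S = Y := by
  have hSu : IsUnit S.det := hS.det_pos.ne'.isUnit
  refine ⟨S⁻¹ * Y * S⁻¹, ?_, ?_⟩
  · have hinj : Function.Injective S⁻¹.mulVec :=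
      mulVec_injective_iff_isUnit.2 (isUnit_nonsing_inv_iff.2 ((isUnit_iff_isUnit_det S).2 hSu))
    have := hY.conjTranspose_mul_mul_same hinj
    rwa [conjTranspose_nonsing_inv, hS.isHermitian.eq] at this
  · simp only [← Matrix.mul_assoc, mul_nonsing_inv _ hSu, Matrix.one_mul]
    rw [Matrix.mul_assoc, nonsing_inv_mul _ hSu, Matrix.mul_one]

/-- Log-concavity of the determinant on positive definite matrices. -/
theorem PosDef.det_rpow_mul_det_rpow_le {X Y : Matrix m m ℝ} (hX : X.PosDef) (hY : Y.PosDef)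
    {l : ℝ} (h0 : 0 ≤ l) (h1 : l ≤ 1) :
    X.det ^ l * Y.det ^ (1 - l) ≤ (l • X + (1 - l) • Y).det := by
  obtain ⟨S, hS, rfl⟩ := hX.exists_posDef_mul_self_eq
  obtain ⟨C, hC, rfl⟩ := hS.exists_posDef_mul_mul_eq hY
  have hconj : l • (S * S) + (1 - l) • (S * C * S) = S * (l • 1 + (1 - l) • C) * S := by
    simp only [Matrix.mul_add, Matrix.add_mul, Matrix.mul_smul, Matrix.smul_mul, Matrix.mul_one]
  have hSdet := hS.det_pos
  simp only [hconj, det_mul]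
  calc (S.det * S.det) ^ l * (S.det * C.det * S.det) ^ (1 - l)
      = S.det * S.det * C.det ^ (1 - l) := by
        rw [mul_right_comm, Real.mul_rpow (by positivity) hC.det_pos.le, mul_left_comm,
          ← mul_assoc, ← Real.rpow_add (by positivity), sub_add_cancel, Real.rpow_one]
    _ ≤ S.det * S.det * (l • 1 + (1 - l) • C).det := by
        gcongr
        exact hC.det_rpow_le_det_smul_one_add_smul h0 h1
    _ = S.det * (l • 1 + (1 - l) • C).det * S.det := by ring

theorem PosDef.det_le_det_smul_add_smul_of_det_eq {X Y : Matrix m m ℝ} (hX : X.PosDef)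
    (hY : Y.PosDef) (hdet : X.det = Y.det) {l : ℝ} (h0 : 0 ≤ l) (h1 : l ≤ 1) :
    X.det ≤ (l • X + (1 - l) • Y).det := by
  have := hX.det_rpow_mul_det_rpow_le hY h0 h1
  rwa [← hdet, ← Real.rpow_add hX.det_pos, add_sub_cancel, Real.rpow_one] at this

theorem PosSemidef.dotProduct_mulVec_le_of_mulVec_eq_single {M : Matrix m m ℝ}
    (hM : M.PosSemidef) {i : m} {q : ℝ} {x u : m → ℝ} (hMx : M *ᵥ x = Pi.single i q)
    (hu : u i = x i) : x ⬝ᵥ M *ᵥ x ≤ u ⬝ᵥ M *ᵥ u := by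
  obtain ⟨d, rfl⟩ : ∃ d, u = x + d := ⟨u - x, by abel⟩
  have hd : d i = 0 := by simpa using hu
  have hxMd : x ⬝ᵥ M *ᵥ d = 0 := by
    rw [dotProduct_mulVec, ← mulVec_transpose, ← conjTranspose_eq_transpose_of_trivial,
      hM.isHermitian.eq, hMx, single_dotProduct, hd, mul_zero]
  have hdMx : d ⬝ᵥ M *ᵥ x = 0 := by rw [hMx, dotProduct_single, hd, zero_mul]
  have hdMd : 0 ≤ d ⬝ᵥ M *ᵥ d := by simpa using hM.dotProduct_mulVec_nonneg d
  simp only [mulVec_add, dotProduct_add, add_dotProduct, hxMd, hdMx]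
  linarith

theorem PosDef.exists_mulVec_eq_single {M : Matrix m m ℝ} (hM : M.PosDef) (i : m) :
    ∃ x : m → ℝ, x i = 1 ∧ ∃ q, M *ᵥ x = Pi.single i q := by
  have hMu : IsUnit M.det := hM.det_pos.ne'.isUnit
  have hMinv : 0 < M⁻¹ i i := hM.inv.diag_pos
  refine ⟨(M⁻¹ i i)⁻¹ • M⁻¹.col i, by simp [hMinv.ne'], (M⁻¹ i i)⁻¹, ?_⟩
  rw [mulVec_smul, ← mulVec_single_one, mulVec_mulVec, mul_nonsing_inv _ hMu, one_mulVec,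
    ← Pi.single_smul', smul_eq_mul, mul_one]

theorem det_mul_apply_eq_det_submatrix_succAbove_mul {R : Type*} [CommRing R] {n : ℕ}
    (M : Matrix (Fin (n + 1)) (Fin (n + 1)) R) {i : Fin (n + 1)} {x : Fin (n + 1) → R} {q : R}
    (hMx : M *ᵥ x = Pi.single i q) :
    M.det * x i = (M.submatrix i.succAbove i.succAbove).det * q := by
  have h := congrFun (congrArg (M.adjugate *ᵥ ·) hMx) i
  simp only [mulVec_mulVec, adjugate_mul, smul_mulVec, one_mulVec, Pi.smul_apply,
    smul_eq_mul] at h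
  simp [h, mulVec_single, adjugate_fin_succ_eq_det_submatrix]

theorem PosDef.isLeast_det_submatrix_succAbove_mul {n : ℕ}
    {M : Matrix (Fin (n + 1)) (Fin (n + 1)) ℝ} (hM : M.PosDef) (i : Fin (n + 1)) :
    IsLeast ((fun u ↦ (M.submatrix i.succAbove i.succAbove).det * (u ⬝ᵥ M *ᵥ u)) ''
      {u | u i = 1}) M.det := by
  obtain ⟨x, hx, q, hMx⟩ := hM.exists_mulVec_eq_single i
  have hdet : M.det = (M.submatrix i.succAbove i.succAbove).det * (x ⬝ᵥ M *ᵥ x) := by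
    rw [hMx, dotProduct_single, hx, one_mul, ← mul_one M.det, ← hx,
      det_mul_apply_eq_det_submatrix_succAbove_mul M hMx]
  refine ⟨⟨x, hx, hdet.symm⟩, ?_⟩
  rintro _ ⟨u, hu, rfl⟩
  rw [hdet]
  exact mul_le_mul_of_nonneg_left
    (hM.posSemidef.dotProduct_mulVec_le_of_mulVec_eq_single hMx (hu.trans hx.symm))
    (hM.submatrix Fin.succAbove_right_injective).det_pos.le

end Matrix

theorem det_superadditive_of_eq_minor_general (n : ℕ) (A B : Matrix (Fin (n + 1)) (Fin (n + 1)) ℝ)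
    (hA : A.PosDef) (hB : B.PosDef) (i : Fin (n + 1))
    (hminor : (A.submatrix i.succAbove i.succAbove).det
      = (B.submatrix i.succAbove i.succAbove).det)
    (lam : ℝ) (hlam0 : 0 ≤ lam) (hlam1 : lam ≤ 1) :
    (lam • A + (1 - lam) • B).det ≥ lam * A.det + (1 - lam) * B.det := by
  set C := lam • A + (1 - lam) • B
  have hC : C.PosDef := hA.smul_add_smul hB hlam0 hlam1
  have hminorC : (A.submatrix i.succAbove i.succAbove).det
      ≤ (C.submatrix i.succAbove i.succAbove).det := by
    have hinj := Fin.succAbove_right_injective (p := i)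
    convert (hA.submatrix hinj).det_le_det_smul_add_smul_of_det_eq (hB.submatrix hinj) hminor
      hlam0 hlam1 using 2
    ext; simp [C]
  obtain ⟨⟨x, hx, hCx⟩, -⟩ := hC.isLeast_det_submatrix_succAbove_mul i
  have hAx := (hA.isLeast_det_submatrix_succAbove_mul i).2 ⟨x, hx, rfl⟩
  have hBx := (hB.isLeast_det_submatrix_succAbove_mul i).2 ⟨x, hx, rfl⟩
  rw [← hminor] at hBx
  have hCq : 0 ≤ x ⬝ᵥ C *ᵥ x := by simpa using hC.posSemidef.dotProduct_mulVec_nonneg x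
  have hq : x ⬝ᵥ C *ᵥ x = lam * (x ⬝ᵥ A *ᵥ x) + (1 - lam) * (x ⬝ᵥ B *ᵥ x) := by
    simp [C, add_mulVec, smul_mulVec, dotProduct_add, dotProduct_smul]
  simp only at hCx hAx hBx
  rw [ge_iff_le, ← hCx]
  calc lam * A.det + (1 - lam) * B.det
      ≤ lam * ((A.submatrix i.succAbove i.succAbove).det * (x ⬝ᵥ A *ᵥ x))
        + (1 - lam) * ((A.submatrix i.succAbove i.succAbove).det * (x ⬝ᵥ B *ᵥ x)) := by
        gcongr
    _ = (A.submatrix i.succAbove i.succAbove).det * (x ⬝ᵥ C *ᵥ x) := by rw [hq]; ring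
    _ ≤ (C.submatrix i.succAbove i.succAbove).det * (x ⬝ᵥ C *ᵥ x) := by gcongr

/-- If the `i`-th deleted-row-and-column submatrices of two positive definite symmetric
matrices have equal determinants, then the determinant is superadditive along the segment:
`det(λA + (1-λ)B) ≥ λ det A + (1-λ) det B`. -/
theorem det_superadditive_of_eq_minor (n : ℕ) (A B : Matrix (Fin (n + 1)) (Fin (n + 1)) ℝ)
    (hA : A.PosDef) (hB : B.PosDef) (hAs : A.IsSymm) (hBs : B.IsSymm) (i : Fin (n + 1))
    (hminor : (A.submatrix i.succAbove i.succAbove).det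
      = (B.submatrix i.succAbove i.succAbove).det)
    (lam : ℝ) (hlam0 : 0 ≤ lam) (hlam1 : lam ≤ 1) :
    (lam • A + (1 - lam) • B).det ≥ lam * A.det + (1 - lam) * B.det :=
  det_superadditive_of_eq_minor_general n A B hA hB i hminor lam hlam0 hlam1
end

section
/- Characterization of equality: Let Σ₁, Σ₂ be n×n positive definite symmetric matrices whose (n−1)×(n−1) leading principal submatrices are both equal to the identity matrix I_{n−1}. If det((1−λ)Σ₁ + λΣ₂) = (1−λ)det(Σ₁) + λ det(Σ₂) for some λ ∈ (0,1), then the off-diagonal entries of the last row (and column) of Σ₁ and Σ₂ agree, i.e., (Σ₁)_{in} = (Σ₂)_{in} for all i = 1,…,n−1. -/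
/-!
With the leading block equal to the identity, the Schur complement gives
`det Σ = a - ‖v‖²`, where `v` is the last column above the diagonal. This is affine in
the diagonal entry `a` and concave in `v`: along the segment,
`det((1-λ)Σ₁ + λΣ₂) - ((1-λ) det Σ₁ + λ det Σ₂) = λ(1-λ)‖v₁ - v₂‖²`,
so equality of the determinants forces `v₁ = v₂`.
-/

namespace Matrix

variable {R : Type*} [CommRing R] {n : ℕ}

theorem det_eq_sub_sum_of_submatrix_castSucc_eq_one
    (S : Matrix (Fin (n + 1)) (Fin (n + 1)) R) (h : S.submatrix Fin.castSucc Fin.castSucc = 1) :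
    S.det = S (Fin.last n) (Fin.last n) -
      ∑ i : Fin n, S (Fin.last n) i.castSucc * S i.castSucc (Fin.last n) := by
  rw [← det_submatrix_equiv_self finSumFinEquiv, ← fromBlocks_toBlocks (S.submatrix _ _)]
  have h₁₁ : (S.submatrix finSumFinEquiv finSumFinEquiv).toBlocks₁₁ = 1 := h
  rw [h₁₁, det_fromBlocks_one₁₁, det_unique]
  simp only [toBlocks₁₂, toBlocks₂₁, toBlocks₂₂, submatrix_apply, finSumFinEquiv_apply_left,
    finSumFinEquiv_apply_right, Fin.default_eq_zero, sub_apply, of_apply, mul_apply]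
  -- `Fin.natAdd n 0` and `Fin.castAdd 1 i` are `Fin.last n` and `i.castSucc` by definition
  rfl

theorem IsSymm.det_eq_sub_sum_sq_of_submatrix_castSucc_eq_one
    {S : Matrix (Fin (n + 1)) (Fin (n + 1)) R} (hS : S.IsSymm)
    (h : S.submatrix Fin.castSucc Fin.castSucc = 1) :
    S.det = S (Fin.last n) (Fin.last n) - ∑ i : Fin n, S i.castSucc (Fin.last n) ^ 2 := by
  simp_rw [det_eq_sub_sum_of_submatrix_castSucc_eq_one S h, hS.apply (Fin.last n), sq]

theorem det_convexComb_sub_eq_mul_sum_sq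
    {S₁ S₂ : Matrix (Fin (n + 1)) (Fin (n + 1)) R} (hS₁ : S₁.IsSymm) (hS₂ : S₂.IsSymm)
    (h₁ : S₁.submatrix Fin.castSucc Fin.castSucc = 1)
    (h₂ : S₂.submatrix Fin.castSucc Fin.castSucc = 1) (t : R) :
    ((1 - t) • S₁ + t • S₂).det - ((1 - t) * S₁.det + t * S₂.det) =
      t * (1 - t) * ∑ i : Fin n, (S₁ i.castSucc (Fin.last n) - S₂ i.castSucc (Fin.last n)) ^ 2 := by
  have hS : ((1 - t) • S₁ + t • S₂).IsSymm := (hS₁.smul _).add (hS₂.smul _)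
  have h : ((1 - t) • S₁ + t • S₂).submatrix Fin.castSucc Fin.castSucc = 1 := by
    change (1 - t) • S₁.submatrix Fin.castSucc Fin.castSucc +
      t • S₂.submatrix Fin.castSucc Fin.castSucc = 1
    rw [h₁, h₂, ← add_smul, sub_add_cancel, one_smul]
  rw [hS₁.det_eq_sub_sum_sq_of_submatrix_castSucc_eq_one h₁,
    hS₂.det_eq_sub_sum_sq_of_submatrix_castSucc_eq_one h₂,
    hS.det_eq_sub_sum_sq_of_submatrix_castSucc_eq_one h]
  have sq_gap (x y : R) : t * (1 - t) * (x - y) ^ 2 =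
      (1 - t) * x ^ 2 + t * y ^ 2 - ((1 - t) * x + t * y) ^ 2 := by ring
  simp only [add_apply, smul_apply, smul_eq_mul, Finset.mul_sum, sq_gap]
  simp only [Finset.sum_sub_distrib, Finset.sum_add_distrib, ← Finset.mul_sum]
  ring

end Matrix

theorem equality_case_last_column_general (n : ℕ)
    (S1 S2 : Matrix (Fin (n + 1)) (Fin (n + 1)) ℝ)
    (h1s : S1.IsSymm) (h2s : S2.IsSymm)
    (hId1 : ∀ i j : Fin n, S1 i.castSucc j.castSucc = if i = j then 1 else 0)
    (hId2 : ∀ i j : Fin n, S2 i.castSucc j.castSucc = if i = j then 1 else 0)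
    (lam : ℝ) (hlam0 : 0 < lam) (hlam1 : lam < 1)
    (heq : ((1 - lam) • S1 + lam • S2).det = (1 - lam) * S1.det + lam * S2.det) :
    ∀ i : Fin n, S1 i.castSucc (Fin.last n) = S2 i.castSucc (Fin.last n) := by
  have hgap := Matrix.det_convexComb_sub_eq_mul_sum_sq h1s h2s
    (Matrix.ext fun i j => (hId1 i j).trans Matrix.one_apply.symm)
    (Matrix.ext fun i j => (hId2 i j).trans Matrix.one_apply.symm) lam
  rw [heq, sub_self] at hgap
  have hsum := (mul_eq_zero.1 hgap.symm).resolve_left (mul_pos hlam0 (sub_pos.2 hlam1)).ne'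
  intro i
  have hi := (Finset.sum_eq_zero_iff_of_nonneg fun j _ => sq_nonneg _).1 hsum i (Finset.mem_univ i)
  exact sub_eq_zero.1 (pow_eq_zero_iff two_ne_zero |>.1 hi)

/-- Equality case: if `Σ₁`, `Σ₂` are positive definite symmetric matrices whose leading
principal `n × n` submatrices are the identity, and the determinant is additive along the
segment at some `λ ∈ (0,1)`, then the off-diagonal entries of the last column coincide. -/
theorem equality_case_last_column (n : ℕ)
    (S1 S2 : Matrix (Fin (n + 1)) (Fin (n + 1)) ℝ)
    (h1 : S1.PosDef) (h2 : S2.PosDef) (h1s : S1.IsSymm) (h2s : S2.IsSymm)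
    (hId1 : ∀ i j : Fin n, S1 i.castSucc j.castSucc = if i = j then 1 else 0)
    (hId2 : ∀ i j : Fin n, S2 i.castSucc j.castSucc = if i = j then 1 else 0)
    (lam : ℝ) (hlam0 : 0 < lam) (hlam1 : lam < 1)
    (heq : ((1 - lam) • S1 + lam • S2).det = (1 - lam) * S1.det + lam * S2.det) :
    ∀ i : Fin n, S1 i.castSucc (Fin.last n) = S2 i.castSucc (Fin.last n) :=
  equality_case_last_column_general n S1 S2 h1s h2s hId1 hId2 lam hlam0 hlam1 heq
end
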